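/- arXiv:math/0407020 — 5 statements merged into one kernel-verified Lean document; each statement's English description precedes it below -/
import Mathlib

section
/- Let z_1,…,z_N be N distinct complex numbers and let D be the N×N complex matrix with D_{ii} = Σ_{k≠i} 1/(z_i − z_k) and, for i ≠ j, D_{ij} = ω'(z_i)/((z_i − z_j) ω'(z_j)), where ω'(z_i) = ∏_{k≠i}(z_i − z_k). If f is a complex polynomial of degree at most N−1, then for every n ≥ 0 and every i, the n-th derivative satisfies f^{(n)}(z_i) = Σ_{j=1}^N (D^n)_{ij} f(z_j), where D^n is the n-th matrix power of D. -/
/-!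
Entry `(i, j)` of `D` is `ℓⱼ'(zᵢ)`, where `ℓⱼ` is the Lagrange basis polynomial of the nodes: on the
diagonal this is the logarithmic derivative of `ℓᵢ = ∏_{k ≠ i} (X - z_k) / (zᵢ - z_k)`, off it only
the factor `X - zᵢ` of `ℓⱼ` contributes. A polynomial of degree `< N` equals its Lagrange
interpolant `Σⱼ f(zⱼ) ℓⱼ`, so `D` maps its values at the nodes to those of its derivative; as
differentiation does not raise the degree, `Dⁿ` does the same for the `n`-th derivative.
-/

open Finset Polynomial
open scoped Matrix

theorem Polynomial.iteratedDeriv_eval {𝕜 : Type*} [NontriviallyNormedField 𝕜] (p : 𝕜[X])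
    (n : ℕ) : iteratedDeriv n (fun x => p.eval x) = fun x => (derivative^[n] p).eval x := by
  induction n generalizing p with
  | zero => simp
  | succ n ih =>
    have hderiv : _root_.deriv (fun x => p.eval x) = fun x => (derivative p).eval x := by
      funext x
      exact p.deriv
    rw [iteratedDeriv_succ', hderiv, ih, Function.iterate_succ_apply]

namespace Lagrange

variable {F ι : Type*} [Field F] [DecidableEq ι] {s : Finset ι} {v : ι → F} {i j : ι}

theorem eval_derivative_basis_self (hvs : Set.InjOn v s) (hi : i ∈ s) :
    (derivative (Lagrange.basis s v i)).eval (v i) = ∑ k ∈ s.erase i, 1 / (v i - v k) := by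
  have hne : ∀ k ∈ s.erase i, v i ≠ v k := fun k hk h =>
    (mem_erase.mp hk).1 (hvs (mem_of_mem_erase hk) hi h.symm)
  rw [Lagrange.basis, derivative_prod_finset, eval_finsetSum]
  refine sum_congr rfl fun k _ => ?_
  rw [eval_mul, eval_prod, prod_eq_one fun m hm => eval_basisDivisor_left_of_ne
    (hne m (mem_of_mem_erase hm)), one_mul]
  simp [basisDivisor]

theorem eval_derivative_basis_of_ne (hvs : Set.InjOn v s) (hi : i ∈ s) (hj : j ∈ s)
    (hij : i ≠ j) :
    (derivative (Lagrange.basis s v j)).eval (v i) =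
      (∏ k ∈ s.erase i, (v i - v k)) / ((v i - v j) * ∏ k ∈ s.erase j, (v j - v k)) := by
  have hij' : i ∈ s.erase j := mem_erase.mpr ⟨hij, hi⟩
  have hsub : v i - v j ≠ 0 := sub_ne_zero.mpr fun h => hij (hvs hi hj h)
  have hweight : (∏ k ∈ s.erase j, (v j - v k)) ≠ 0 := by
    simpa [nodalWeight, prod_inv_distrib] using nodalWeight_ne_zero hvs hj
  rw [basis_eq_prod_sub_inv_mul_nodal_div hj, ← nodal_erase_eq_nodal_div hj, derivative_C_mul,
    eval_mul, eval_C, eval_nodal_derivative_eval_node_eq hij', eval_nodal, nodalWeight,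
    prod_inv_distrib, ← mul_prod_erase _ _ (mem_erase.mpr ⟨Ne.symm hij, hj⟩), erase_right_comm]
  field_simp

section DifferentiationMatrix

variable [Fintype ι] (v : ι → F)

noncomputable def differentiationMatrix : Matrix ι ι F :=
  Matrix.of fun i j => (derivative (Lagrange.basis univ v j)).eval (v i)

variable {v}

theorem differentiationMatrix_mulVec_eval (hv : Function.Injective v) {f : F[X]}
    (hf : f.degree < Fintype.card ι) :
    differentiationMatrix v *ᵥ (fun j => f.eval (v j)) = fun i => (derivative f).eval (v i) := by
  funext i
  rw [← card_univ] at hf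
  conv_rhs => rw [eq_interpolate hv.injOn hf]
  rw [interpolate_apply, derivative_sum, eval_finsetSum]
  refine sum_congr rfl fun j _ => ?_
  rw [derivative_C_mul, eval_mul, eval_C, mul_comm]
  rfl

theorem differentiationMatrix_pow_mulVec_eval (hv : Function.Injective v) {f : F[X]}
    (hf : f.degree < Fintype.card ι) (n : ℕ) :
    differentiationMatrix v ^ n *ᵥ (fun j => f.eval (v j)) =
      fun i => (derivative^[n] f).eval (v i) := by
  induction n generalizing f with
  | zero => simp
  | succ n ih =>
    rw [pow_succ, ← Matrix.mulVec_mulVec, differentiationMatrix_mulVec_eval hv hf,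
      ih (degree_derivative_le.trans_lt hf), Function.iterate_succ_apply]

end DifferentiationMatrix

end Lagrange

open Lagrange in
/-- Powers of the algebraic differentiation matrix give higher derivatives: if `f` is a
complex polynomial of degree at most `N − 1`, then for every `n ≥ 0`,
`f⁽ⁿ⁾(z i) = Σ_j (Dⁿ) i j * f (z j)`. -/
theorem algebraic_differentiation_matrix_pow (N : ℕ) (zs : Fin N → ℂ)
    (hz : Function.Injective zs) (D : Matrix (Fin N) (Fin N) ℂ)
    (hD : ∀ i j, D i j =
      if i = j then ∑ k ∈ Finset.univ.erase i, 1 / (zs i - zs k)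
      else (∏ k ∈ Finset.univ.erase i, (zs i - zs k)) /
        ((zs i - zs j) * ∏ k ∈ Finset.univ.erase j, (zs j - zs k)))
    (f : Polynomial ℂ) (hf : f.degree ≤ (N - 1 : ℕ)) (n : ℕ) (i : Fin N) :
    iteratedDeriv n (fun z : ℂ => f.eval z) (zs i) = ∑ j, (D ^ n) i j * f.eval (zs j) := by
  have hD' : D = differentiationMatrix zs := by
    ext i j
    rw [hD, differentiationMatrix, Matrix.of_apply]
    split_ifs with hij
    · subst hij
      exact (eval_derivative_basis_self hz.injOn (mem_univ i)).symm
    · exact (eval_derivative_basis_of_ne hz.injOn (mem_univ i) (mem_univ j) hij).symm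
  have hf' : f.degree < Fintype.card (Fin N) := by
    rw [Fintype.card_fin]
    exact hf.trans_lt (by exact_mod_cast Nat.sub_one_lt_of_lt i.pos)
  rw [Polynomial.iteratedDeriv_eval, hD']
  exact (congrFun (differentiationMatrix_pow_mulVec_eval hz hf' n) i).symm
end

section
/- Let f be a complex function that is complex differentiable on a neighborhood of the closed disc of center c and radius R > 0, let z_1,…,z_N be N distinct points of the open disc of center c and radius R, let ω(z) = ∏_{k=1}^N (z − z_k), and let z be any point of the open disc. Then (1/(2πi)) ∮_{|ζ−c|=R} (f(ζ)/ω(ζ)) · ((ω(ζ) − ω(z))/(ζ − z)) dζ = Σ_{j=1}^N f(z_j) ℓ_j(z), where ℓ_j(z) = ∏_{k≠j}(z − z_k)/∏_{k≠j}(z_j − z_k) is the j-th Lagrange basis polynomial. (The integrand is well defined on the circle since |ζ − c| = R forces ζ ≠ z and ω(ζ) ≠ 0.) -/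
open Finset

open Polynomial in
private lemma hermite_key (N : ℕ) (zs : Fin N → ℂ) (hz : Function.Injective zs) (z ζ : ℂ)
    (hζz : ζ ≠ z) :
    ((∏ k, (ζ - zs k)) - ∏ k, (z - zs k)) / (ζ - z) =
      ∑ j, ((∏ k ∈ Finset.univ.erase j, (z - zs k)) /
          (∏ k ∈ Finset.univ.erase j, (zs j - zs k))) * ∏ k ∈ Finset.univ.erase j, (ζ - zs k) := by
  classical
  set W : ℂ[X] := Lagrange.nodal Finset.univ zs with hW
  set P : ℂ := ∏ k, (z - zs k) with hP
  obtain ⟨q, hq⟩ : (X - C z) ∣ (W - C P) := by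
    have := Polynomial.X_sub_C_dvd_sub_C_eval (a := z) (p := W)
    rwa [hW, Lagrange.eval_nodal] at this
  have hdegq : q.degree < ((Finset.univ : Finset (Fin N)).card : WithBot ℕ) := by
    rcases eq_or_ne q 0 with rfl | hq0
    · rw [degree_zero]
      exact bot_lt_iff_ne_bot.2 (by simp)
    · have h1 : (W - C P).degree ≤ (N : WithBot ℕ) := by
        refine (degree_sub_le _ _).trans (max_le ?_ ?_)
        · rw [hW, Lagrange.degree_nodal]; simp
        · exact degree_C_le.trans (by exact_mod_cast Nat.zero_le N)
      rw [hq, degree_mul, degree_X_sub_C, degree_eq_natDegree hq0] at h1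
      have h1' : 1 + q.natDegree ≤ N := by exact_mod_cast h1
      rw [degree_eq_natDegree hq0, Finset.card_univ, Fintype.card_fin]
      exact_mod_cast by omega
  have hinterp : q = Lagrange.interpolate Finset.univ zs (fun i => q.eval (zs i)) :=
    Lagrange.eq_interpolate hz.injOn hdegq
  have hnode : ∀ j, q.eval (zs j) = ∏ k ∈ Finset.univ.erase j, (z - zs k) := by
    intro j
    rcases eq_or_ne (zs j) z with he | hne
    · have hP0 : P = 0 := by
        rw [hP, ← Finset.mul_prod_erase _ _ (Finset.mem_univ j), ← he, sub_self, zero_mul]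
      have hWsplit : W = (X - C z) * Lagrange.nodal (Finset.univ.erase j) zs := by
        rw [hW, Lagrange.nodal_eq_mul_nodal_erase (Finset.mem_univ j), he]
      have hqq : q = Lagrange.nodal (Finset.univ.erase j) zs := by
        apply mul_left_cancel₀ (X_sub_C_ne_zero z)
        rw [← hWsplit, ← hq, hP0, map_zero, sub_zero]
      rw [hqq, Lagrange.eval_nodal, he]
    · have h := congrArg (Polynomial.eval (zs j)) hq
      have hWj : W.eval (zs j) = 0 := by
        rw [hW]; exact Lagrange.eval_nodal_at_node (Finset.mem_univ j)
      rw [eval_sub, eval_mul, eval_sub, eval_X, eval_C, eval_C, hWj, zero_sub] at h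
      apply mul_left_cancel₀ (sub_ne_zero.2 hne)
      rw [← h, hP, ← Finset.mul_prod_erase _ (fun k => z - zs k) (Finset.mem_univ j)]
      ring
  have hev := congrArg (Polynomial.eval ζ) hq
  rw [eval_sub, eval_mul, eval_sub, eval_X, eval_C, eval_C, hW, Lagrange.eval_nodal] at hev
  rw [hev, mul_div_cancel_left₀ _ (sub_ne_zero.2 hζz)]
  conv_lhs => rw [hinterp]
  rw [Lagrange.interpolate_apply, Polynomial.eval_finset_sum]
  refine Finset.sum_congr rfl fun j _ => ?_
  rw [eval_mul, eval_C, hnode j]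
  rw [Lagrange.basis, eval_prod]
  have : ∀ k ∈ Finset.univ.erase j, eval ζ (Lagrange.basisDivisor (zs j) (zs k))
      = (zs j - zs k)⁻¹ * (ζ - zs k) := by
    intro k _
    rw [Lagrange.basisDivisor, eval_mul, eval_C, eval_sub, eval_X, eval_C]
  rw [Finset.prod_congr rfl this, Finset.prod_mul_distrib, Finset.prod_inv_distrib,
    div_eq_mul_inv]
  ring

private lemma circleIntegral_finset_sum {ι : Type*} (s : Finset ι) (g : ι → ℂ → ℂ) (c : ℂ)
    (R : ℝ) (h : ∀ i ∈ s, CircleIntegrable (g i) c R) :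
    (∮ ζ in C(c, R), ∑ i ∈ s, g i ζ) = ∑ i ∈ s, ∮ ζ in C(c, R), g i ζ := by
  simp only [circleIntegral, Finset.smul_sum]
  exact intervalIntegral.integral_finset_sum fun i hi => (circleIntegrable_iff R).1 (h i hi)

/-- The Hermite contour-integral interpolation formula evaluates, via the residue
theorem, to the Lagrange interpolation formula:
`(1/(2πi)) ∮_{|ζ−c|=R} (f ζ / ω ζ) ((ω ζ − ω z)/(ζ − z)) dζ = Σ_j f (z j) ℓ_j z`. -/
theorem hermite_integral_eq_lagrange (N : ℕ) (c : ℂ) (R : ℝ) (hR : 0 < R)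
    (f : ℂ → ℂ) (U : Set ℂ) (hU : IsOpen U) (hUc : Metric.closedBall c R ⊆ U)
    (hf : DifferentiableOn ℂ f U)
    (zs : Fin N → ℂ) (hz : Function.Injective zs)
    (hmem : ∀ k, zs k ∈ Metric.ball c R)
    (z : ℂ) (hzmem : z ∈ Metric.ball c R) :
    (2 * Real.pi * Complex.I)⁻¹ *
        (∮ ζ in C(c, R),
          (f ζ / ∏ k, (ζ - zs k)) *
            (((∏ k, (ζ - zs k)) - ∏ k, (z - zs k)) / (ζ - z))) =
      ∑ j, f (zs j) *
        ((∏ k ∈ Finset.univ.erase j, (z - zs k)) /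
          (∏ k ∈ Finset.univ.erase j, (zs j - zs k))) := by
  classical
  set L : Fin N → ℂ := fun j => (∏ k ∈ Finset.univ.erase j, (z - zs k)) /
      (∏ k ∈ Finset.univ.erase j, (zs j - zs k)) with hL
  have hfc : DifferentiableOn ℂ f (Metric.closedBall c R) := hf.mono hUc
  have hfs : ContinuousOn f (Metric.sphere c R) :=
    hfc.continuousOn.mono Metric.sphere_subset_closedBall
  have hsphere : ∀ ζ ∈ Metric.sphere c R, ∀ w ∈ Metric.ball c R, ζ ≠ w := by
    intro ζ hζ w hw h
    rw [Metric.mem_sphere] at hζ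
    rw [Metric.mem_ball, ← h, hζ] at hw
    exact lt_irrefl _ hw
  have hcong : (∮ ζ in C(c, R),
        (f ζ / ∏ k, (ζ - zs k)) *
          (((∏ k, (ζ - zs k)) - ∏ k, (z - zs k)) / (ζ - z)))
      = ∮ ζ in C(c, R), ∑ j, L j * ((ζ - zs j)⁻¹ * f ζ) := by
    refine circleIntegral.integral_congr hR.le fun ζ hζ => ?_
    have hζz : ζ ≠ z := hsphere ζ hζ z hzmem
    have hζk : ∀ k, ζ - zs k ≠ 0 := fun k => sub_ne_zero.2 (hsphere ζ hζ _ (hmem k))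
    rw [hermite_key N zs hz z ζ hζz, Finset.mul_sum]
    refine Finset.sum_congr rfl fun j _ => ?_
    have hω : (∏ k, (ζ - zs k)) = (ζ - zs j) * ∏ k ∈ Finset.univ.erase j, (ζ - zs k) :=
      (Finset.mul_prod_erase _ _ (Finset.mem_univ j)).symm
    have h1 : (∏ k ∈ Finset.univ.erase j, (ζ - zs k)) ≠ 0 :=
      Finset.prod_ne_zero_iff.2 fun k _ => hζk k
    have h2 : (∏ k ∈ Finset.univ.erase j, (zs j - zs k)) ≠ 0 :=
      Finset.prod_ne_zero_iff.2 fun k hk =>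
        sub_ne_zero.2 fun e => (Finset.mem_erase.1 hk).1 (hz e.symm)
    rw [hω, div_eq_mul_inv, mul_inv]
    have h1' : (∏ k ∈ Finset.univ.erase j, (ζ - zs k))⁻¹ *
        ∏ k ∈ Finset.univ.erase j, (ζ - zs k) = 1 := inv_mul_cancel₀ h1
    linear_combination (f ζ * (ζ - zs j)⁻¹ * L j) * h1'
  have hint : ∀ j ∈ (Finset.univ : Finset (Fin N)),
      CircleIntegrable (fun ζ => L j * ((ζ - zs j)⁻¹ * f ζ)) c R := by
    intro j _
    refine ContinuousOn.circleIntegrable hR.le ?_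
    refine continuousOn_const.mul (ContinuousOn.mul ?_ hfs)
    exact ((continuousOn_id.sub continuousOn_const).inv₀
      fun ζ hζ => sub_ne_zero.2 (hsphere ζ hζ _ (hmem j)))
  have hcau : ∀ j, (∮ ζ in C(c, R), (ζ - zs j)⁻¹ * f ζ)
      = (2 * Real.pi * Complex.I) * f (zs j) := by
    intro j
    have := hfc.circleIntegral_sub_inv_smul (hmem j)
    simpa [smul_eq_mul] using this
  have h2πI : (2 * (Real.pi : ℂ) * Complex.I) ≠ 0 := by
    simp [Real.pi_ne_zero, Complex.I_ne_zero]
  rw [hcong, circleIntegral_finset_sum _ _ _ _ hint]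
  simp only [circleIntegral.integral_const_mul]
  rw [Finset.mul_sum]
  refine Finset.sum_congr rfl fun j _ => ?_
  rw [hcau j]
  field_simp
  ring
end

section
/- Let f be a complex function that is complex differentiable on a neighborhood of the closed disc of center c and radius R > 0, let z_1,…,z_N be N distinct points of the open disc of center c and radius R, let ω(z) = ∏_{k=1}^N (z − z_k), and let p(z) = Σ_{j=1}^N f(z_j) ℓ_j(z) be the Lagrange interpolant of f at the nodes z_k. Then for every z in the open disc, the interpolation remainder satisfies f(z) − p(z) = (ω(z)/(2πi)) ∮_{|ζ−c|=R} f(ζ) / ((ζ − z) ω(ζ)) dζ. -/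
/-!
Write `ω` for the nodal polynomial and `ℓ j` for the Lagrange basis. For fixed `ζ`, the divided
difference `w ↦ (ω ζ - ω w) / (ζ - w)` is a polynomial of degree `< N`, hence equal to its own
Lagrange interpolant; evaluated at `z` this is the partial fraction identity
`ω z / ((ζ - z) ω ζ) = 1 / (ζ - z) - ∑ j, ℓ j z / (ζ - z_j)`, i.e. the interpolation remainder of the
Cauchy kernel. Multiplying by `f ζ`, integrating over the circle and applying Cauchy's integral
formula to each term gives `f z - ∑ j, f z_j ℓ j z`.
-/

open Finset

namespace Lagrange

open Polynomial

variable {F ι : Type*} [Field F] [DecidableEq ι] {s : Finset ι} {v : ι → F}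

theorem eval_basis (i : ι) (x : F) :
    (Lagrange.basis s v i).eval x =
      (∏ j ∈ s.erase i, (x - v j)) / ∏ j ∈ s.erase i, (v i - v j) := by
  simp only [Lagrange.basis, basisDivisor, eval_prod, eval_mul, eval_C, eval_sub, eval_X,
    prod_mul_distrib, prod_inv_distrib, div_eq_mul_inv, mul_comm]

theorem eval_nodal_sub_eval_nodal (hvs : Set.InjOn v s) {ζ : F} (hζ : ∀ i ∈ s, ζ ≠ v i)
    (z : F) :
    (nodal s v).eval ζ - (nodal s v).eval z =
      (ζ - z) * ∑ i ∈ s, (Lagrange.basis s v i).eval z * (nodal (s.erase i) v).eval ζ := by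
  rcases s.eq_empty_or_nonempty with rfl | hs
  · simp
  set P := nodal s v - C ((nodal s v).eval ζ)
  set Q := P /ₘ (X - C ζ)
  have hPQ : (X - C ζ) * Q = P := mul_divByMonic_eq_iff_isRoot.2 (by simp [P])
  have hdegP : P.degree = #s := by
    rw [degree_sub_C] <;> rw [degree_nodal]
    exact_mod_cast hs.card_pos
  have hdegQ : Q.degree < #s := hdegP ▸ degree_divByMonic_lt _ _
    (fun h => by simp [h] at hdegP) (by simp)
  have hQ_node : ∀ i ∈ s, Q.eval (v i) = (nodal (s.erase i) v).eval ζ := by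
    intro i hi
    have h := congrArg (eval (v i)) hPQ
    have hω : (nodal s v).eval ζ = (ζ - v i) * (nodal (s.erase i) v).eval ζ := by
      rw [nodal_eq_mul_nodal_erase hi, eval_mul, eval_sub, eval_X, eval_C]
    simp only [P, eval_mul, eval_sub, eval_X, eval_C, eval_nodal_at_node hi, hω] at h
    exact mul_left_cancel₀ (sub_ne_zero.2 (hζ i hi).symm) (by linear_combination h)
  have hQ_eval :
      Q.eval z = ∑ i ∈ s, (Lagrange.basis s v i).eval z * (nodal (s.erase i) v).eval ζ := by
    rw [eq_interpolate_of_eval_eq _ hvs hdegQ hQ_node, interpolate_apply, eval_finsetSum]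
    simp only [eval_mul, eval_C, mul_comm]
  have h := congrArg (eval z) hPQ
  simp only [P, eval_mul, eval_sub, eval_X, eval_C] at h
  rw [← hQ_eval]
  linear_combination h

theorem inv_sub_sub_sum_eval_basis_mul_inv_sub (hvs : Set.InjOn v s) {ζ z : F} (hζz : ζ ≠ z)
    (hζ : ∀ i ∈ s, ζ ≠ v i) :
    (ζ - z)⁻¹ - ∑ i ∈ s, (Lagrange.basis s v i).eval z * (ζ - v i)⁻¹ =
      (nodal s v).eval z / ((ζ - z) * (nodal s v).eval ζ) := by
  have hω : (nodal s v).eval ζ ≠ 0 := eval_nodal_not_at_node hζ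
  have hterm : ∀ i ∈ s, (ζ - v i)⁻¹ = (nodal (s.erase i) v).eval ζ / (nodal s v).eval ζ := by
    intro i hi
    rw [nodal_eq_mul_nodal_erase hi, eval_mul] at hω ⊢
    simp only [eval_sub, eval_X, eval_C] at hω ⊢
    field_simp [right_ne_zero_of_mul hω]
  have hB := eval_nodal_sub_eval_nodal hvs hζ z
  rw [sum_congr rfl fun i hi => by rw [hterm i hi, mul_div_assoc'], ← sum_div]
  field_simp [sub_ne_zero.2 hζz]
  linear_combination hB

end Lagrange

open Metric Set Complex

theorem DifferentiableOn.circleIntegral_div_sub {f : ℂ → ℂ} {c w : ℂ} {R : ℝ}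
    (hf : DifferentiableOn ℂ f (closedBall c R)) (hw : w ∈ ball c R) :
    (∮ ζ in C(c, R), f ζ / (ζ - w)) = 2 * Real.pi * I * f w := by
  simpa only [smul_eq_mul, div_eq_inv_mul] using hf.circleIntegral_sub_inv_smul hw

theorem ContinuousOn.circleIntegrable_div_sub {f : ℂ → ℂ} {c w : ℂ} {R : ℝ}
    (hf : ContinuousOn f (sphere c R)) (hw : w ∈ ball c R) :
    CircleIntegrable (fun ζ => f ζ / (ζ - w)) c R :=
  (hf.div (continuousOn_id.sub continuousOn_const) fun _ hζ =>
    sub_ne_zero.2 (sphere_disjoint_ball.ne_of_mem hζ hw)).circleIntegrable (pos_of_mem_ball hw).le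

theorem DifferentiableOn.circleIntegral_div_sub_sub_sum {ι : Type*} {f : ℂ → ℂ} {c z : ℂ}
    {R : ℝ} {s : Finset ι} {v : ι → ℂ} (a : ι → ℂ) (hf : DifferentiableOn ℂ f (closedBall c R))
    (hz : z ∈ ball c R) (hv : ∀ i ∈ s, v i ∈ ball c R) :
    (∮ ζ in C(c, R), (f ζ / (ζ - z) - ∑ i ∈ s, a i * (f ζ / (ζ - v i)))) =
      2 * Real.pi * I * (f z - ∑ i ∈ s, a i * f (v i)) := by
  have hfS : ContinuousOn f (sphere c R) := hf.continuousOn.mono sphere_subset_closedBall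
  have hint : ∀ i ∈ s, CircleIntegrable (fun ζ => a i * (f ζ / (ζ - v i))) c R :=
    fun i hi => (hfS.circleIntegrable_div_sub (hv i hi)).const_fun_smul
  rw [circleIntegral.integral_sub (hfS.circleIntegrable_div_sub hz)
      (CircleIntegrable.fun_sum _ hint), circleIntegral.integral_fun_sum hint,
    hf.circleIntegral_div_sub hz, mul_sub, mul_sum]
  congr 1
  refine sum_congr rfl fun i hi => ?_
  rw [circleIntegral.integral_const_mul, hf.circleIntegral_div_sub (hv i hi)]
  ring

theorem lagrange_interpolation_remainder_general (N : ℕ) (c : ℂ) (R : ℝ)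
    (f : ℂ → ℂ) (U : Set ℂ) (hUc : Metric.closedBall c R ⊆ U)
    (hf : DifferentiableOn ℂ f U)
    (zs : Fin N → ℂ) (hz : Function.Injective zs)
    (hmem : ∀ k, zs k ∈ Metric.ball c R)
    (z : ℂ) (hzmem : z ∈ Metric.ball c R) :
    f z - ∑ j, f (zs j) *
        ((∏ k ∈ Finset.univ.erase j, (z - zs k)) /
          (∏ k ∈ Finset.univ.erase j, (zs j - zs k))) =
      (∏ k, (z - zs k)) / (2 * Real.pi * Complex.I) *
        ∮ ζ in C(c, R), f ζ / ((ζ - z) * ∏ k, (ζ - zs k)) := by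
  simp only [← Lagrange.eval_basis]
  set ℓ : Fin N → ℂ := fun j => (Lagrange.basis univ zs j).eval z
  have hkernel : EqOn (fun ζ => (∏ k, (z - zs k)) * (f ζ / ((ζ - z) * ∏ k, (ζ - zs k))))
      (fun ζ => f ζ / (ζ - z) - ∑ j, ℓ j * (f ζ / (ζ - zs j))) (sphere c R) := by
    intro ζ hζ
    have hne : ∀ w ∈ ball c R, ζ ≠ w := fun w hw => sphere_disjoint_ball.ne_of_mem hζ hw
    have h := Lagrange.inv_sub_sub_sum_eval_basis_mul_inv_sub (s := univ) hz.injOn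
      (hne z hzmem) fun j _ => hne (zs j) (hmem j)
    simp only [Lagrange.eval_nodal] at h
    have hsplit : f ζ / (ζ - z) - ∑ j, ℓ j * (f ζ / (ζ - zs j)) =
        f ζ * ((ζ - z)⁻¹ - ∑ j, ℓ j * (ζ - zs j)⁻¹) := by
      simp only [mul_sub, mul_sum, div_eq_mul_inv, mul_left_comm]
    simp only [hsplit, ℓ, h]
    ring
  have h2πI : (2 * Real.pi * I : ℂ) ≠ 0 := by simp [Real.pi_ne_zero]
  rw [div_mul_eq_mul_div, eq_div_iff h2πI, ← circleIntegral.integral_const_mul,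
    circleIntegral.integral_congr (pos_of_mem_ball hzmem).le hkernel,
    (hf.mono hUc).circleIntegral_div_sub_sub_sum ℓ hzmem fun j _ => hmem j, mul_comm]
  simp only [mul_comm (f _), ℓ]

/-- The remainder of Lagrange interpolation of an analytic function:
`f z − p z = (ω z/(2πi)) ∮_{|ζ−c|=R} f ζ / ((ζ − z) ω ζ) dζ` for `z` in the open disc,
where `p` is the Lagrange interpolant of `f` at the nodes. -/
theorem lagrange_interpolation_remainder (N : ℕ) (c : ℂ) (R : ℝ) (hR : 0 < R)
    (f : ℂ → ℂ) (U : Set ℂ) (hU : IsOpen U) (hUc : Metric.closedBall c R ⊆ U)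
    (hf : DifferentiableOn ℂ f U)
    (zs : Fin N → ℂ) (hz : Function.Injective zs)
    (hmem : ∀ k, zs k ∈ Metric.ball c R)
    (z : ℂ) (hzmem : z ∈ Metric.ball c R) :
    f z - ∑ j, f (zs j) *
        ((∏ k ∈ Finset.univ.erase j, (z - zs k)) /
          (∏ k ∈ Finset.univ.erase j, (zs j - zs k))) =
      (∏ k, (z - zs k)) / (2 * Real.pi * Complex.I) *
        ∮ ζ in C(c, R), f ζ / ((ζ - z) * ∏ k, (ζ - zs k)) :=
  lagrange_interpolation_remainder_general N c R f U hUc hf zs hz hmem z hzmem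
end

section
/- Let m ≥ 0, set N = 2m+1, and let z_1,…,z_N be complex numbers such that e^{iz_1},…,e^{iz_N} are pairwise distinct. If f(z) = a_0 + Σ_{k=1}^m (a_k cos kz + b_k sin kz) is a trigonometric polynomial of degree at most m with complex coefficients, then for every z ∈ ℂ, f(z) = Σ_{j=1}^N f(z_j) · ∏_{k≠j} sin((z − z_k)/2) / ∏_{k≠j} sin((z_j − z_k)/2) (the Gauss trigonometric interpolation formula is exact on trigonometric polynomials of degree at most m). -/
open Finset Polynomial Complex

/-! Multiplying by `e^{imz}` turns `f` into a polynomial `P` of degree at most `2m` in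
`w = e^{iz}`, and `2i sin((z - z_k)/2) = (e^{iz} - e^{iz_k}) e^{-i(z + z_k)/2}` turns each
sine-product weight into `e^{-im(z - z_j)}` times the Lagrange basis polynomial of the nodes
`e^{iz_k}` evaluated at `w`. The formula is thus Lagrange interpolation of `P` at `2m + 1`
distinct nodes, which is exact since `deg P < 2m + 1`. -/

theorem Polynomial.eval_eq_sum_mul_prod_div {F ι : Type*} [Field F] [DecidableEq ι]
    {s : Finset ι} {v : ι → F} (hvs : Set.InjOn v s) {p : F[X]} (hp : p.degree < #s) (x : F) :
    p.eval x = ∑ i ∈ s, p.eval (v i) * ∏ j ∈ s.erase i, (x - v j) / (v i - v j) := by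
  conv_lhs => rw [Lagrange.eq_interpolate hvs hp]
  simp [Lagrange.interpolate_apply, Lagrange.basis, Lagrange.basisDivisor, eval_finsetSum,
    eval_prod, div_eq_inv_mul]

noncomputable def trigSum (m : ℕ) (a b : ℕ → ℂ) (z : ℂ) : ℂ :=
  a 0 + ∑ k ∈ Icc 1 m, (a k * cos (k * z) + b k * sin (k * z))

/-- `cos kz = (e^{ikz} + e^{-ikz})/2` and `sin kz = (e^{ikz} - e^{-ikz})/(2i)` give
`e^{imz} · trigSum m a b z = (trigSumPoly m a b).eval (e^{iz})`. -/
noncomputable def trigSumPoly (m : ℕ) (a b : ℕ → ℂ) : ℂ[X] :=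
  C (a 0) * X ^ m + ∑ k ∈ Icc 1 m,
    (C ((a k - I * b k) / 2) * X ^ (m + k) + C ((a k + I * b k) / 2) * X ^ (m - k))

lemma degree_trigSumPoly_lt (m : ℕ) (a b : ℕ → ℂ) :
    (trigSumPoly m a b).degree < ↑(2 * m + 1) := by
  refine (degree_le_of_natDegree_le ?_).trans_lt (by exact_mod_cast Nat.lt_succ_self (2 * m))
  refine natDegree_add_le_of_degree_le ((natDegree_C_mul_X_pow_le _ _).trans (by omega))
    (natDegree_sum_le_of_forall_le _ _ fun k hk => natDegree_add_le_of_degree_le ?_ ?_) <;>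
  · have := (mem_Icc.mp hk).2
    exact (natDegree_C_mul_X_pow_le _ _).trans (by omega)

lemma exp_mul_cos_sin_eq (m k : ℕ) (hk : k ≤ m) (α β t : ℂ) :
    exp (I * m * t) * (α * cos (k * t) + β * sin (k * t)) =
      (α - I * β) / 2 * exp (I * t) ^ (m + k) + (α + I * β) / 2 * exp (I * t) ^ (m - k) := by
  have hpow (n : ℕ) : exp (I * t) ^ n = exp (n * t * I) := by rw [← exp_nat_mul]; ring_nf
  have hE : exp (k * t * I) ≠ 0 := exp_ne_zero _
  rw [pow_add, pow_sub₀ _ (exp_ne_zero _) hk, hpow, hpow, cos, sin, neg_mul, exp_neg,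
    show I * m * t = m * t * I by ring]
  field_simp
  ring

lemma eval_exp_trigSumPoly (m : ℕ) (a b : ℕ → ℂ) (t : ℂ) :
    (trigSumPoly m a b).eval (exp (I * t)) = exp (I * m * t) * trigSum m a b t := by
  simp only [trigSumPoly, trigSum, eval_add, eval_mul, eval_pow, eval_C, eval_X, eval_finsetSum]
  rw [mul_add, mul_sum]
  congr 1
  · rw [← exp_nat_mul]; ring_nf
  · exact sum_congr rfl fun k hk => (exp_mul_cos_sin_eq m k (mem_Icc.mp hk).2 _ _ t).symm

lemma two_mul_I_mul_sin_sub_div_two (x u : ℂ) :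
    2 * I * sin ((x - u) / 2) = (exp (I * x) - exp (I * u)) * exp (-(I * (x + u)) / 2) := by
  rw [sub_mul, ← exp_add, ← exp_add, sin]
  ring_nf
  rw [I_sq]
  ring

lemma prod_sin_sub_div_two_div {ι : Type*} (s : Finset ι) (u : ι → ℂ) (x y : ℂ) :
    ∏ k ∈ s, sin ((x - u k) / 2) / sin ((y - u k) / 2) =
      exp (-(I * (x - y)) / 2) ^ #s *
        ∏ k ∈ s, (exp (I * x) - exp (I * u k)) / (exp (I * y) - exp (I * u k)) := by
  rw [← prod_const, ← prod_mul_distrib]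
  refine prod_congr rfl fun k _ => ?_
  rw [← mul_div_mul_left _ _ (mul_ne_zero two_ne_zero I_ne_zero),
    two_mul_I_mul_sin_sub_div_two, two_mul_I_mul_sin_sub_div_two, mul_div_mul_comm,
    ← exp_sub, mul_comm]
  ring_nf

/-- Gauss trigonometric interpolation is exact on trigonometric polynomials of degree
at most `m`, using `N = 2m+1` nodes whose exponentials `e^{iz_k}` are pairwise
distinct. -/
theorem gauss_trig_interpolation_exact (m : ℕ) (zs : Fin (2 * m + 1) → ℂ)
    (hz : Function.Injective fun k => Complex.exp (Complex.I * zs k))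
    (a b : ℕ → ℂ) (z : ℂ) :
    a 0 + ∑ k ∈ Finset.Icc 1 m,
        (a k * Complex.cos (k * z) + b k * Complex.sin (k * z)) =
      ∑ j, (a 0 + ∑ k ∈ Finset.Icc 1 m,
          (a k * Complex.cos (k * zs j) + b k * Complex.sin (k * zs j))) *
        ((∏ k ∈ Finset.univ.erase j, Complex.sin ((z - zs k) / 2)) /
          (∏ k ∈ Finset.univ.erase j, Complex.sin ((zs j - zs k) / 2))) := by
  change trigSum m a b z = ∑ j, trigSum m a b (zs j) * _
  have hLagrange := (trigSumPoly m a b).eval_eq_sum_mul_prod_div (s := univ) hz.injOn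
    (by rw [card_univ, Fintype.card_fin]; exact degree_trigSumPoly_lt m a b) (exp (I * z))
  simp only [eval_exp_trigSumPoly] at hLagrange
  have hratio (j : Fin (2 * m + 1)) :
      (∏ k ∈ univ.erase j, sin ((z - zs k) / 2)) /
          ∏ k ∈ univ.erase j, sin ((zs j - zs k) / 2) =
        exp (-(I * m * z)) * exp (I * m * zs j) *
          ∏ k ∈ univ.erase j,
            (exp (I * z) - exp (I * zs k)) / (exp (I * zs j) - exp (I * zs k)) := by
    rw [← prod_div_distrib, prod_sin_sub_div_two_div, card_erase_of_mem (mem_univ j), card_univ,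
      Fintype.card_fin, Nat.add_sub_cancel, ← exp_nat_mul, ← exp_add]
    congr 2
    push_cast
    ring
  calc trigSum m a b z = exp (-(I * m * z)) * (exp (I * m * z) * trigSum m a b z) := by
        rw [← mul_assoc, ← exp_add, neg_add_cancel, exp_zero, one_mul]
    _ = _ := by
        rw [hLagrange, mul_sum]
        refine sum_congr rfl fun j _ => ?_
        rw [hratio]
        ring
end

section
/- Let z_1,…,z_N be N distinct complex numbers, let α be a complex number with α ≠ z_k for all k, let m ≥ 0, and let D be the N×N complex matrix with D_{ii} = Σ_{k≠i} 1/(z_i − z_k) − m/(z_i − α) and, for i ≠ j, D_{ij} = ((z_j − α)^m/(z_i − α)^m) · ω'(z_i)/((z_i − z_j) ω'(z_j)), where ω'(z_i) = ∏_{k≠i}(z_i − z_k). If q is a complex polynomial of degree at most N−1 and f(z) = q(z)/(z − α)^m, then for every i, f'(z_i) = Σ_{j=1}^N D_{ij} f(z_j). -/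
/-!
Write `q` in the Lagrange basis `ℓ_j = ω_j / ω_j(z_j)`, `ω_j = ∏_{k ≠ j} (X - z_k)`. At a node,
`ℓ_i'(z_i) = Σ_{k ≠ i} 1 / (z_i - z_k)` is the logarithmic derivative of `ω_i`, while for `j ≠ i`
only the term of `ω_j'` without the factor `X - z_i` survives, giving
`ℓ_j'(z_i) = ω'(z_i) / ((z_i - z_j) ω'(z_j))`: this is the case `m = 0`. The quotient rule
`f' = (q' - m q / (z - α)) / (z - α)^m` then contributes the diagonal term `-m / (z_i - α)` and the
factors `(z_j - α)^m / (z_i - α)^m`.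
-/

open Finset Polynomial Lagrange

section LagrangeDerivative

variable {F : Type*} [Field F] {ι : Type*} [DecidableEq ι] {s : Finset ι} {v : ι → F} {i j : ι}

theorem Lagrange.basis_eq_C_nodalWeight_mul_nodal_erase (s : Finset ι) (v : ι → F) (i : ι) :
    Lagrange.basis s v i = C (nodalWeight s v i) * nodal (s.erase i) v := by
  simp_rw [Lagrange.basis, basisDivisor, nodalWeight, prod_mul_distrib, map_prod, nodal]

theorem Lagrange.eval_derivative_nodal_of_ne {t : Finset ι} {x : F} (hx : ∀ k ∈ t, x ≠ v k) :
    (derivative (nodal t v)).eval x = (nodal t v).eval x * ∑ k ∈ t, (x - v k)⁻¹ := by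
  rw [derivative_nodal, eval_finsetSum, mul_sum]
  refine sum_congr rfl fun l hl => ?_
  rw [eval_nodal, eval_nodal, ← mul_prod_erase t _ hl, mul_comm (x - v l), mul_assoc,
    mul_inv_cancel₀ (sub_ne_zero.2 (hx l hl)), mul_one]

theorem Lagrange.eval_derivative_basis_self_s15 (hvs : Set.InjOn v s) (hi : i ∈ s) :
    (derivative (Lagrange.basis s v i)).eval (v i) = ∑ k ∈ s.erase i, (v i - v k)⁻¹ := by
  have hnodes : ∀ k ∈ s.erase i, v i ≠ v k := fun k hk =>
    fun h => (ne_of_mem_erase hk) (hvs (mem_of_mem_erase hk) hi h.symm)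
  rw [basis_eq_C_nodalWeight_mul_nodal_erase, derivative_C_mul, eval_mul, eval_C,
    eval_derivative_nodal_of_ne hnodes, ← mul_assoc, nodalWeight_eq_eval_nodal_erase_inv,
    inv_mul_cancel₀ (eval_nodal_not_at_node hnodes), one_mul]

theorem Lagrange.eval_derivative_basis_of_ne_s15 (hvs : Set.InjOn v s) (hij : i ≠ j) (hi : i ∈ s)
    (hj : j ∈ s) :
    (derivative (Lagrange.basis s v j)).eval (v i) =
      (∏ k ∈ s.erase i, (v i - v k)) / ((v i - v j) * ∏ k ∈ s.erase j, (v j - v k)) := by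
  have hvij : v i - v j ≠ 0 := sub_ne_zero.2 fun h => hij (hvs hi hj h)
  rw [basis_eq_C_nodalWeight_mul_nodal_erase, derivative_C_mul, eval_mul, eval_C,
    eval_nodal_derivative_eval_node_eq (mem_erase.2 ⟨hij, hi⟩), eval_nodal, erase_right_comm,
    nodalWeight, prod_inv_distrib, ← mul_prod_erase (s.erase i) (fun k => v i - v k)
      (mem_erase.2 ⟨hij.symm, hj⟩)]
  field_simp

theorem Polynomial.eval_derivative_node_eq_sum (hvs : Set.InjOn v s) {P : F[X]}
    (hP : P.degree < #s) (hi : i ∈ s) :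
    (derivative P).eval (v i) =
      P.eval (v i) * ∑ k ∈ s.erase i, (v i - v k)⁻¹ +
        ∑ j ∈ s.erase i, (∏ k ∈ s.erase i, (v i - v k)) /
          ((v i - v j) * ∏ k ∈ s.erase j, (v j - v k)) * P.eval (v j) := by
  conv_lhs => rw [eq_interpolate hvs hP, interpolate_apply]
  rw [derivative_sum, eval_finsetSum, ← add_sum_erase _ _ hi]
  simp only [derivative_C_mul, eval_mul, eval_C]
  congr 1
  · rw [eval_derivative_basis_self_s15 hvs hi]
  · refine sum_congr rfl fun j hj => ?_
    rw [eval_derivative_basis_of_ne_s15 hvs (ne_of_mem_erase hj).symm hi (mem_of_mem_erase hj),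
      mul_comm]

end LagrangeDerivative

theorem hasDerivAt_eval_div_sub_pow {𝕜 : Type*} [NontriviallyNormedField 𝕜] (p : 𝕜[X])
    {α x : 𝕜} (hx : x ≠ α) (m : ℕ) :
    HasDerivAt (fun z => p.eval z / (z - α) ^ m)
      (((derivative p).eval x - m / (x - α) * p.eval x) / (x - α) ^ m) x := by
  have hxα : x - α ≠ 0 := sub_ne_zero.2 hx
  have hden : HasDerivAt (fun z => (z - α) ^ m) (m * (x - α) ^ (m - 1)) x := by
    simpa using ((hasDerivAt_id x).sub_const α).fun_pow m
  refine ((p.hasDerivAt x).fun_div hden (pow_ne_zero m hxα)).congr_deriv ?_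
  cases m with
  | zero => simp
  | succ n =>
    rw [Nat.add_sub_cancel]
    field_simp
    ring

/-- The rational differentiation matrix for a pole of order `m` at `α` is exact on
rational functions `f z = q z / (z − α)^m` with `deg q ≤ N − 1`:
`f'(z i) = Σ_j D i j * f (z j)`. -/
theorem rational_differentiation_matrix (N : ℕ) (zs : Fin N → ℂ)
    (hz : Function.Injective zs) (α : ℂ) (hα : ∀ k, α ≠ zs k) (m : ℕ)
    (D : Matrix (Fin N) (Fin N) ℂ)
    (hD : ∀ i j, D i j =
      if i = j then
        (∑ k ∈ Finset.univ.erase i, 1 / (zs i - zs k)) - m / (zs i - α)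
      else
        ((zs j - α) ^ m / (zs i - α) ^ m) *
          ((∏ k ∈ Finset.univ.erase i, (zs i - zs k)) /
            ((zs i - zs j) * ∏ k ∈ Finset.univ.erase j, (zs j - zs k))))
    (q : Polynomial ℂ) (hq : q.degree ≤ (N - 1 : ℕ)) (i : Fin N) :
    deriv (fun z : ℂ => q.eval z / (z - α) ^ m) (zs i) =
      ∑ j, D i j * (q.eval (zs j) / (zs j - α) ^ m) := by
  have hdeg : q.degree < #(univ : Finset (Fin N)) := by
    rw [card_univ, Fintype.card_fin]
    exact hq.trans_lt (by exact_mod_cast Nat.sub_lt i.pos one_pos)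
  have hoff : ∀ j ∈ univ.erase i, D i j * (q.eval (zs j) / (zs j - α) ^ m) =
      (∏ k ∈ univ.erase i, (zs i - zs k)) /
        ((zs i - zs j) * ∏ k ∈ univ.erase j, (zs j - zs k)) * q.eval (zs j) / (zs i - α) ^ m := by
    intro j hj
    have hzα : zs j - α ≠ 0 := sub_ne_zero.2 (hα j).symm
    rw [hD, if_neg (ne_of_mem_erase hj).symm]
    field_simp
  rw [(hasDerivAt_eval_div_sub_pow q (hα i).symm m).deriv,
    eval_derivative_node_eq_sum hz.injOn hdeg (mem_univ i), ← add_sum_erase _ _ (mem_univ i),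
    sum_congr rfl hoff, ← sum_div, hD, if_pos rfl]
  simp only [one_div]
  ring
end
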